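/- arXiv:2112.15495 — 2 statements merged into one kernel-verified Lean document; each statement's English description precedes it below -/
import Mathlib

section
/- Let K be an algebraically closed field of characteristic 0, let D₁,…,D_n be pairwise commuting endomorphisms of a finite-dimensional K-vector space E, represented simultaneously by upper triangular matrices with diagonal sequences λ^{(i)} = (λ₁^{(i)},…,λ_d^{(i)}). Suppose x = (x₁,…,x_n) ∈ K^n satisfies: for all j, j′, Σ_i x_i λ_j^{(i)} = Σ_i x_i λ_{j′}^{(i)} implies (λ_j^{(1)},…,λ_j^{(n)}) = (λ_{j′}^{(1)},…,λ_{j′}^{(n)}). Then the subalgebra K[D₁,…,D_n] of End_K(E) equals K[D(x)] + Rad(K[D₁,…,D_n]), where D(x) = Σ_i x_i D_i and Rad denotes the Jacobson radical. -/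
/-!
In a basis triangularizing all `D i`, taking the `j`-th diagonal entry is a character of
`K[D₁,…,Dₙ]`; an element killed by all these characters is strictly upper triangular, hence
nilpotent, hence in the radical. The hypothesis on `x` says that the `j`-th eigenvalue of `D i`
is a function of the `j`-th eigenvalue `μ j` of `D(x)`, so a Lagrange interpolation polynomial
`f` with `f (μ j) = λ_j^{(i)}` puts `D i - f (D(x))` in the radical. Finally `K[D(x)] + Rad` is
a subalgebra (the preimage of `K[D(x) mod Rad]` in the quotient), and it contains the
generators.
-/

open Polynomial Module

namespace Matrix

variable {m R : Type*} [Fintype m] [LinearOrder m] [CommRing R]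

theorem IsUpperTriangular.diag_mul {M N : Matrix m m R} (hM : M.IsUpperTriangular)
    (hN : N.IsUpperTriangular) : (M * N).diag = M.diag * N.diag := by
  ext j
  simp only [diag_apply, Pi.mul_apply, mul_apply]
  refine Finset.sum_eq_single_of_mem j (Finset.mem_univ j) fun k _ hk => ?_
  rcases hk.lt_or_gt with h | h
  · rw [hM h, zero_mul]
  · rw [hN h, mul_zero]

variable [DecidableEq m]

variable (m R) in
def upperTriangularDiagAlgHom : blockTriangularSubalgebra R R (id : m → m) →ₐ[R] m → R where
  toFun M := M.1.diag
  map_one' := diag_one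
  map_mul' M N := IsUpperTriangular.diag_mul M.2 N.2
  map_zero' := diag_zero
  map_add' M N := diag_add M.1 N.1
  commutes' r := by ext; simp [algebraMap_eq_diagonal]

theorem IsUpperTriangular.diag_aeval {M : Matrix m m R} (hM : M.IsUpperTriangular) (f : R[X]) :
    (aeval M f).diag = aeval M.diag f :=
  calc (aeval M f).diag = upperTriangularDiagAlgHom m R (aeval ⟨M, hM⟩ f) := by
        rw [← aeval_subalgebra_coe f (blockTriangularSubalgebra R R id) ⟨M, hM⟩]; rfl
    _ = aeval M.diag f := (aeval_algHom_apply _ _ f).symm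

theorem IsUpperTriangular.aeval {M : Matrix m m R} (hM : M.IsUpperTriangular) (f : R[X]) :
    (Polynomial.aeval M f).IsUpperTriangular := by
  rw [← aeval_subalgebra_coe f (blockTriangularSubalgebra R R id) ⟨M, hM⟩]
  exact (Polynomial.aeval (⟨M, hM⟩ : blockTriangularSubalgebra R R id) f).2

theorem IsUpperTriangular.isNilpotent {M : Matrix m m R} (hM : M.IsUpperTriangular)
    (hd : M.diag = 0) : IsNilpotent M := by
  have hchar : M.charpoly = X ^ Fintype.card m := by
    simp [charpoly_of_isUpperTriangular M hM, ← diag_apply, hd]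
  exact ⟨Fintype.card m, by simpa [hchar] using aeval_self_charpoly M⟩

end Matrix

theorem Polynomial.exists_eval_eq_of_factorsThrough {ι K : Type*} [Fintype ι] [Field K]
    {μ v : ι → K} (h : v.FactorsThrough μ) : ∃ f : K[X], ∀ j, f.eval (μ j) = v j := by
  classical
  refine ⟨Lagrange.interpolate (Finset.univ.image μ) id (Function.extend μ v 0), fun j =>
    (Lagrange.eval_interpolate_at_node _ (Set.injOn_id _)
      (Finset.mem_image_of_mem μ (Finset.mem_univ j))).trans (h.extend_apply 0 j)⟩

theorem Ideal.exists_aeval_sub_mem_of_adjoin_eq_top {K A : Type*} [CommRing K] [CommRing A]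
    [Algebra K A] (I : Ideal A) (y : A) {s : Set A} (hs : Algebra.adjoin K s = ⊤)
    (hgen : ∀ a ∈ s, ∃ f : K[X], a - aeval y f ∈ I) (a : A) :
    ∃ f : K[X], a - aeval y f ∈ I := by
  let B := (Algebra.adjoin K {Ideal.Quotient.mk I y}).comap (Ideal.Quotient.mkₐ K I)
  have hB : ∀ a, a ∈ B ↔ ∃ f : K[X], a - aeval y f ∈ I := fun a => by
    simp only [B, Subalgebra.mem_comap, Algebra.adjoin_singleton_eq_range_aeval, AlgHom.mem_range]
    have hmk : ∀ f : K[X], aeval (Ideal.Quotient.mk I y) f = Ideal.Quotient.mk I (aeval y f) :=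
      aeval_algHom_apply (Ideal.Quotient.mkₐ K I) y
    simp only [hmk, Ideal.Quotient.mkₐ_eq_mk]
    exact exists_congr fun f => by rw [Ideal.Quotient.eq, sub_mem_comm_iff]
  have : Algebra.adjoin K s ≤ B := Algebra.adjoin_le fun a ha => (hB a).2 (hgen a ha)
  exact (hB a).1 (this (hs ▸ Algebra.mem_top))

section Triangular

variable {E ι : Type*} [AddCommGroup E] [Fintype ι] [DecidableEq ι] [LinearOrder ι]

theorem Module.End.isNilpotent_sub_aeval_of_isUpperTriangular {R : Type*} [CommRing R]
    [Module R E] (b : Basis ι R E) {S T : Module.End R E}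
    (hS : (LinearMap.toMatrix b b S).IsUpperTriangular)
    (hT : (LinearMap.toMatrix b b T).IsUpperTriangular) {f : R[X]}
    (hf : ∀ j, f.eval (LinearMap.toMatrix b b S j j) = LinearMap.toMatrix b b T j j) :
    IsNilpotent (T - aeval S f) := by
  rw [← IsNilpotent.map_iff (LinearMap.toMatrixAlgEquiv b).injective, map_sub,
    ← aeval_algHom_apply]
  change IsNilpotent (LinearMap.toMatrix b b T - aeval (LinearMap.toMatrix b b S) f)
  refine Matrix.IsUpperTriangular.isNilpotent (hT.sub (hS.aeval f)) ?_
  ext j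
  rw [Matrix.diag_sub, Pi.sub_apply, hS.diag_aeval, aeval_pi_apply₂]
  simp [hf]

theorem Module.End.exists_isNilpotent_sub_aeval_sum_smul {K σ : Type*} [Field K] [Module K E]
    (b : Basis ι K E) [Fintype σ]
    {D : σ → Module.End K E} (hD : ∀ i, (LinearMap.toMatrix b b (D i)).IsUpperTriangular)
    {lam : ι → σ → K} (hdiag : ∀ i p, LinearMap.toMatrix b b (D i) p p = lam p i)
    {x : σ → K} (hx : ∀ j j', ∑ i, x i * lam j i = ∑ i, x i * lam j' i →
      ∀ i, lam j i = lam j' i) (i : σ) :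
    ∃ f : K[X], IsNilpotent (D i - aeval (∑ k, x k • D k) f) := by
  have hmatrix : LinearMap.toMatrix b b (∑ k, x k • D k) =
      ∑ k, x k • LinearMap.toMatrix b b (D k) := by
    simp only [map_sum, map_smul]
  have htri : (LinearMap.toMatrix b b (∑ k, x k • D k)).IsUpperTriangular := by
    rw [hmatrix]
    exact Subalgebra.sum_mem (Matrix.blockTriangularSubalgebra K K id) fun k _ =>
      Subalgebra.smul_mem _ (Matrix.mem_blockTriangularSubalgebra.2 (hD k)) _
  have hdiag_sum : ∀ j, LinearMap.toMatrix b b (∑ k, x k • D k) j j = ∑ k, x k * lam j k :=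
    fun j => by simp [hmatrix, Matrix.sum_apply, hdiag]
  obtain ⟨f, hf⟩ := exists_eval_eq_of_factorsThrough
    (μ := fun j => ∑ k, x k * lam j k) (v := fun j => lam j i) fun j j' h => hx j j' h i
  exact ⟨f, isNilpotent_sub_aeval_of_isUpperTriangular b htri (hD i)
    fun j => by rw [hdiag_sum, hf, hdiag]⟩

end Triangular

theorem adjoin_commuting_triangular_eq_single_generator_plus_radical_general
    {K E : Type*} [Field K]
    [AddCommGroup E] [Module K E]
    (d n : ℕ) (b : Basis (Fin d) K E)
    (D : Fin n → Module.End K E)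
    (hcomm : ∀ i j, Commute (D i) (D j))
    (lam : Fin d → Fin n → K)
    (htri : ∀ (i : Fin n) (p q : Fin d), q < p → LinearMap.toMatrix b b (D i) p q = 0)
    (hdiag : ∀ (i : Fin n) (p : Fin d), LinearMap.toMatrix b b (D i) p p = lam p i)
    (x : Fin n → K)
    (hx : ∀ j j' : Fin d, (∑ i, x i * lam j i) = (∑ i, x i * lam j' i) →
      ∀ i, lam j i = lam j' i) :
    ((Algebra.adjoin K (Set.range D) : Subalgebra K (Module.End K E)) : Set (Module.End K E)) =
      {M : Module.End K E | ∃ f : Polynomial K,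
        ∃ r ∈ ((⊥ : Ideal (Algebra.adjoin K (Set.range D))).jacobson),
          M = Polynomial.aeval (∑ i, x i • D i) f + (r : Module.End K E)} := by
  set A := Algebra.adjoin K (Set.range D)
  have : IsMulCommutative A := Algebra.isMulCommutative_adjoin K <| by
    rintro _ ⟨i, rfl⟩ _ ⟨j, rfl⟩
    exact hcomm i j
  -- commutativity is what puts the nilpotent elements of `A` into its Jacobson radical
  open scoped IsMulCommutative in
  let : CommRing A := inferInstance
  set Dx := ∑ i, x i • D i
  have hDxA : Dx ∈ A :=
    Subalgebra.sum_mem _ fun i _ =>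
      Subalgebra.smul_mem _ (Algebra.subset_adjoin (Set.mem_range_self i)) _
  have hgen : ∀ a ∈ ((↑) : A → Module.End K E) ⁻¹' Set.range D,
      ∃ f : K[X], a - aeval ⟨Dx, hDxA⟩ f ∈ (⊥ : Ideal A).jacobson := by
    rintro a ⟨i, hi⟩
    obtain ⟨f, hf⟩ := Module.End.exists_isNilpotent_sub_aeval_sum_smul b
      (fun i _ _ => htri i _ _) hdiag hx i
    refine ⟨f, Ideal.radical_le_jacobson (mem_nilradical.2 ?_)⟩
    rwa [← IsNilpotent.map_iff (f := A.val) Subtype.val_injective, map_sub, Subalgebra.coe_val,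
      coe_aeval_mk_apply, ← hi]
  ext M
  refine ⟨fun hM => ?_, ?_⟩
  · obtain ⟨f, hf⟩ := Ideal.exists_aeval_sub_mem_of_adjoin_eq_top _ ⟨Dx, hDxA⟩
      Algebra.adjoin_adjoin_coe_preimage hgen (⟨M, hM⟩ : A)
    exact ⟨f, _, hf, by simp⟩
  · rintro ⟨f, r, -, rfl⟩
    exact add_mem (coe_aeval_mk_apply (h := hDxA) ▸ (aeval (⟨Dx, hDxA⟩ : A) f).2) r.2

theorem adjoin_commuting_triangular_eq_single_generator_plus_radical
    {K E : Type*} [Field K] [IsAlgClosed K] [CharZero K]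
    [AddCommGroup E] [Module K E] [FiniteDimensional K E]
    (d n : ℕ) (b : Basis (Fin d) K E)
    (D : Fin n → Module.End K E)
    (hcomm : ∀ i j, Commute (D i) (D j))
    (lam : Fin d → Fin n → K)
    (htri : ∀ (i : Fin n) (p q : Fin d), q < p → LinearMap.toMatrix b b (D i) p q = 0)
    (hdiag : ∀ (i : Fin n) (p : Fin d), LinearMap.toMatrix b b (D i) p p = lam p i)
    (x : Fin n → K)
    (hx : ∀ j j' : Fin d, (∑ i, x i * lam j i) = (∑ i, x i * lam j' i) →
      ∀ i, lam j i = lam j' i) :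
    ((Algebra.adjoin K (Set.range D) : Subalgebra K (Module.End K E)) : Set (Module.End K E)) =
      {M : Module.End K E | ∃ f : Polynomial K,
        ∃ r ∈ ((⊥ : Ideal (Algebra.adjoin K (Set.range D))).jacobson),
          M = Polynomial.aeval (∑ i, x i • D i) f + (r : Module.End K E)} :=
  adjoin_commuting_triangular_eq_single_generator_plus_radical_general d n b D hcomm lam htri hdiag
    x hx
end

section
/- Let B be a finite-dimensional commutative algebra over a field K of characteristic 0, and K′/K any field extension. If S is a simple B-module, then K′ ⊗_K S is a semisimple multiplicity-free module over K′ ⊗_K B. -/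
/-!
A simple `B`-module `S` is isomorphic to `L = B ⧸ m` for a maximal ideal `m`, and `L` is a
finite, hence separable, extension of `K`. So `K' ⊗ S ≅ K' ⊗ L`, on which `K' ⊗ B` acts through
the surjection `K' ⊗ B → K' ⊗ L`, and `K' ⊗ L` is reduced (étale over `K'`) and Artinian, hence a
semisimple commutative ring. Two isomorphic minimal ideals `I ≅ J` of a reduced commutative ring
coincide: for `0 ≠ x ∈ I` with image `y ∈ J`, the product `x * y = x • y` lies in `I ∩ J` and is
the image of `x * x ≠ 0`.
-/

open TensorProduct

section Setup

variable (K K' B S : Type*) [Field K] [Field K'] [Algebra K K']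
  [CommRing B] [Algebra K B]
  [AddCommGroup S] [Module K S] [Module B S] [IsScalarTower K B S]

/-- The `K`-linear endomorphism of the `B`-module `S` given by the action of `b : B`. -/
def actionLin (b : B) : S →ₗ[K] S where
  toFun s := b • s
  map_add' x y := smul_add b x y
  map_smul' k s := smul_comm b k s

/-- The ring homomorphism `B → End_{K'}(K' ⊗[K] S)` obtained by base-changing the
`B`-action on `S`. -/
noncomputable def rho : B →+* Module.End K' (K' ⊗[K] S) where
  toFun b := LinearMap.baseChange K' (actionLin K B S b)
  map_one' := by ext x; simp [actionLin]
  map_mul' b c := by ext x; simp [actionLin, mul_smul, Module.End.mul_apply]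
  map_zero' := by ext x; simp [actionLin]
  map_add' b c := by ext x; simp [actionLin, add_smul, TensorProduct.tmul_add]

/-- The `B`-module structure on `K' ⊗[K] S` obtained by base change. -/
noncomputable def baseChangeModuleB : Module B (K' ⊗[K] S) :=
  Module.compHom _ (rho K K' B S)

/-- The `K' ⊗[K] B`-module structure on `K' ⊗[K] S`. -/
noncomputable def baseChangeModule : Module (K' ⊗[K] B) (K' ⊗[K] S) := by
  letI := baseChangeModuleB K K' B S
  haveI h2 : IsScalarTower K B (K' ⊗[K] S) := by
    constructor
    intro k b x
    show LinearMap.baseChange K' (actionLin K B S ((k • b))) x =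
      k • LinearMap.baseChange K' (actionLin K B S b) x
    induction x using TensorProduct.induction_on with
    | zero =>
        rw [map_zero, map_zero]
        exact (smul_zero k).symm
    | tmul c s =>
        simp only [LinearMap.baseChange_tmul]
        show c ⊗ₜ[K] ((k • b) • s) = k • (c ⊗ₜ[K] (actionLin K B S b s))
        rw [smul_assoc]
        show c ⊗ₜ[K] (k • (b • s)) = k • (c ⊗ₜ[K] (b • s))
        rw [TensorProduct.tmul_smul]
    | add x y hx hy => simp only [map_add, smul_add, hx, hy]
  haveI h1 : SMulCommClass K' B (K' ⊗[K] S) := by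
    constructor
    intro c b x
    show c • (LinearMap.baseChange K' (actionLin K B S b) x) =
      LinearMap.baseChange K' (actionLin K B S b) (c • x)
    simp
  exact TensorProduct.Algebra.module

attribute [local instance] baseChangeModule

theorem isSemisimpleRing_tensorProduct_of_isSeparable (L : Type*) [Field L] [Algebra K L]
    [FiniteDimensional K L] [Algebra.IsSeparable K L] : IsSemisimpleRing (K' ⊗[K] L) := by
  have : Algebra.FormallyUnramified K L := .of_isSeparable K L
  have : IsReduced (K' ⊗[K] L) := Algebra.FormallyUnramified.isReduced_of_field K' _
  have : IsArtinianRing (K' ⊗[K] L) := .of_finite K' _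
  exact IsArtinianRing.isSemisimpleRing_of_isReduced _

theorem Submodule.eq_of_isSimpleModule_of_linearEquiv {A R M : Type*} [CommRing A]
    [CommRing R] [IsReduced R] [AddCommGroup M] [Module A M] {σ : A →+* R}
    (hσ : Function.Surjective σ) {l : M →ₛₗ[σ] R} (hl : Function.Injective l)
    {p q : Submodule A M} [hp : IsSimpleModule A p] [hq : IsSimpleModule A q]
    (e : p ≃ₗ[A] q) : p = q := by
  rw [isSimpleModule_iff_isAtom] at hp hq
  obtain ⟨x, hxp, hx⟩ := p.exists_mem_ne_zero_of_ne_bot hp.1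
  set y : M := (e ⟨x, hxp⟩).1
  obtain ⟨a, ha⟩ := hσ (l x)
  obtain ⟨b, hb⟩ := hσ (l y)
  have hab : a • y = b • x := hl (by simp only [map_smulₛₗ, ha, hb, smul_eq_mul, mul_comm])
  have hax : a • x ≠ 0 := by
    rw [← hl.ne_iff, map_smulₛₗ, ha, map_zero, smul_eq_mul, ← sq]
    exact pow_ne_zero 2 (hl.ne_iff' (map_zero l) |>.mpr hx)
  have hay : a • y ≠ 0 := by
    have : a • y = (e (a • ⟨x, hxp⟩) : M) := by rw [map_smul]; rfl
    rw [this, Ne, Submodule.coe_eq_zero, e.map_eq_zero_iff, ← Submodule.coe_eq_zero]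
    exact hax
  have hp_mem : a • y ∈ p := hab ▸ p.smul_mem b hxp
  have hq_mem : a • y ∈ q := q.smul_mem a (e ⟨x, hxp⟩).2
  by_contra hpq
  exact hay (Submodule.disjoint_def.mp (hp.disjoint_of_ne hq hpq) _ hp_mem hq_mem)

section

variable {B S}

lemma baseChange_tmul_smul_tmul (c c' : K') (b : B) (s : S) :
    (c ⊗ₜ[K] b : K' ⊗[K] B) • (c' ⊗ₜ[K] s : K' ⊗[K] S) = (c * c') ⊗ₜ[K] (b • s) := by
  with_unfolding_all rfl

variable {L : Type*} [CommRing L] [Algebra K L] [Algebra B L] [IsScalarTower K B L]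

noncomputable def semilinearBaseChange (f : S →ₗ[B] L) :
    K' ⊗[K] S →ₛₗ[(Algebra.TensorProduct.map (AlgHom.id K' K')
      (IsScalarTower.toAlgHom K B L)).toRingHom] K' ⊗[K] L where
  toFun := (f.restrictScalars K).baseChange K'
  map_add' := map_add _
  map_smul' a x := by
    induction a using TensorProduct.induction_on with
    | zero => rw [zero_smul, map_zero, map_zero, zero_smul]
    | add a₁ a₂ h₁ h₂ => rw [add_smul, map_add, h₁, h₂, map_add, add_smul]
    | tmul c b =>
      induction x using TensorProduct.induction_on with
      | zero => rw [smul_zero, map_zero, smul_zero]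
      | add x₁ x₂ h₁ h₂ => rw [smul_add, map_add, map_add, smul_add, h₁, h₂]
      | tmul c' s =>
        rw [baseChange_tmul_smul_tmul]
        simp [Algebra.smul_def]

end

theorem base_change_of_simple_is_semisimple_multiplicity_free
    [FiniteDimensional K B] [CharZero K]
    (hS : IsSimpleModule B S) :
    IsSemisimpleModule (K' ⊗[K] B) (K' ⊗[K] S) ∧
      ∀ p q : Submodule (K' ⊗[K] B) (K' ⊗[K] S),
        IsSimpleModule (K' ⊗[K] B) p → IsSimpleModule (K' ⊗[K] B) q → p ≠ q →
        IsEmpty (p ≃ₗ[K' ⊗[K] B] q) := by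
  obtain ⟨m, hm, ⟨e⟩⟩ := isSimpleModule_iff_quot_maximal.mp hS
  let := Ideal.Quotient.field m
  have := isSemisimpleRing_tensorProduct_of_isSeparable K K' (B ⧸ m)
  let l := semilinearBaseChange K K' e.toLinearMap
  have hl : Function.Bijective l :=
    (LinearEquiv.baseChange K K' _ _ (e.restrictScalars K)).bijective
  have hπ : Function.Surjective (Algebra.TensorProduct.map (AlgHom.id K' K')
      (IsScalarTower.toAlgHom K B (B ⧸ m))) :=
    Algebra.TensorProduct.map_surjective _ _ Function.surjective_id Ideal.Quotient.mk_surjective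
  have : RingHomSurjective _ := ⟨hπ⟩
  refine ⟨(l.isSemisimpleModule_iff_of_bijective hl).mpr inferInstance,
    fun p q _ _ hpq ↦ ⟨fun φ ↦ hpq (Submodule.eq_of_isSimpleModule_of_linearEquiv hπ hl.1 φ)⟩⟩

end Setup
end
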